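/- arXiv:0708.1556 — 9 statements merged into one kernel-verified Lean document; each statement's English description precedes it below -/
import Mathlib

section
/- For any topologies T and U, the Kelleyfication of the product topology T × U equals the Kelleyfication of the product topology (kT) × (kU) of the Kelleyfications; more generally, for any family (T_i)_{i ∈ I} of topologies indexed by a set I, the Kelleyfication of the Tihonov product topology ∏_i T_i equals the Kelleyfication of the product topology ∏_i (k T_i). -/
open Set Filter Topology

/-- The Kelleyfication of a topology `T`: a set is open iff its trace on every `T`-compact
set agrees with the trace of some `T`-open set. -/
def Kelley {X : Type*} (T : TopologicalSpace X) : TopologicalSpace X where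
  IsOpen U := ∀ K : Set X, @IsCompact X T K → ∃ V : Set X, T.IsOpen V ∧ U ∩ K = V ∩ K
  isOpen_univ K _ := ⟨univ, T.isOpen_univ, rfl⟩
  isOpen_inter := by
    intro s t hs ht K hK
    obtain ⟨Vs, hVs, hsK⟩ := hs K hK
    obtain ⟨Vt, hVt, htK⟩ := ht K hK
    refine ⟨Vs ∩ Vt, T.isOpen_inter _ _ hVs hVt, ?_⟩
    ext x
    have h1 := Set.ext_iff.mp hsK x
    have h2 := Set.ext_iff.mp htK x
    simp only [Set.mem_inter_iff] at *
    tauto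
  isOpen_sUnion := by
    intro S hS K hK
    choose! V hV1 hV2 using fun t (ht : t ∈ S) => hS t ht K hK
    refine ⟨⋃ t ∈ S, V t, ?_, ?_⟩
    · letI := T
      exact isOpen_biUnion fun t ht => hV1 t ht
    · ext x
      simp only [Set.mem_inter_iff, Set.mem_sUnion, Set.mem_iUnion, exists_prop]
      constructor
      · rintro ⟨⟨t, htS, hxt⟩, hxK⟩
        have h := Set.ext_iff.mp (hV2 t htS) x
        simp only [Set.mem_inter_iff] at h
        exact ⟨⟨t, htS, (h.mp ⟨hxt, hxK⟩).1⟩, hxK⟩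
      · rintro ⟨⟨t, htS, hxt⟩, hxK⟩
        have h := Set.ext_iff.mp (hV2 t htS) x
        simp only [Set.mem_inter_iff] at h
        exact ⟨⟨t, htS, (h.mpr ⟨hxt, hxK⟩).1⟩, hxK⟩

/-- The k-extension of a topology `T`: like the Kelleyfication, but quantifying only over
`T`-closed `T`-compact sets. -/
def KelleyEx {X : Type*} (T : TopologicalSpace X) : TopologicalSpace X where
  IsOpen U := ∀ K : Set X, @IsCompact X T K → @IsClosed X T K →
    ∃ V : Set X, T.IsOpen V ∧ U ∩ K = V ∩ K
  isOpen_univ K _ _ := ⟨univ, T.isOpen_univ, rfl⟩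
  isOpen_inter := by
    intro s t hs ht K hK hKc
    obtain ⟨Vs, hVs, hsK⟩ := hs K hK hKc
    obtain ⟨Vt, hVt, htK⟩ := ht K hK hKc
    refine ⟨Vs ∩ Vt, T.isOpen_inter _ _ hVs hVt, ?_⟩
    ext x
    have h1 := Set.ext_iff.mp hsK x
    have h2 := Set.ext_iff.mp htK x
    simp only [Set.mem_inter_iff] at *
    tauto
  isOpen_sUnion := by
    intro S hS K hK hKc
    choose! V hV1 hV2 using fun t (ht : t ∈ S) => hS t ht K hK hKc
    refine ⟨⋃ t ∈ S, V t, ?_, ?_⟩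
    · letI := T
      exact isOpen_biUnion fun t ht => hV1 t ht
    · ext x
      simp only [Set.mem_inter_iff, Set.mem_sUnion, Set.mem_iUnion, exists_prop]
      constructor
      · rintro ⟨⟨t, htS, hxt⟩, hxK⟩
        have h := Set.ext_iff.mp (hV2 t htS) x
        simp only [Set.mem_inter_iff] at h
        exact ⟨⟨t, htS, (h.mp ⟨hxt, hxK⟩).1⟩, hxK⟩
      · rintro ⟨⟨t, htS, hxt⟩, hxK⟩
        have h := Set.ext_iff.mp (hV2 t htS) x
        simp only [Set.mem_inter_iff] at h
        exact ⟨⟨t, htS, (h.mpr ⟨hxt, hxK⟩).1⟩, hxK⟩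

/-- A topology is compactly generated iff it is Hausdorff and equals its Kelleyfication. -/
def IsCG {X : Type*} (T : TopologicalSpace X) : Prop :=
  @T2Space X T ∧ Kelley T = T

/-- Local compactness in the sense of the paper: every point of an open set `V` has an
open neighbourhood contained in a compact subset of `V`. -/
def LocCompact {Y : Type*} (t : TopologicalSpace Y) : Prop :=
  ∀ y : Y, ∀ V : Set Y, t.IsOpen V → y ∈ V →
    ∃ K U : Set Y, y ∈ U ∧ t.IsOpen U ∧ U ⊆ K ∧ K ⊆ V ∧ @IsCompact Y t K

/-- A real compactly generated vector space: a compactly generated topology for which the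
algebraic operations are continuous from the Kelleyfications of the product topologies. -/
def IsCGVS {X : Type*} [AddCommGroup X] [Module ℝ X] (T : TopologicalSpace X) : Prop :=
  IsCG T ∧
  Continuous[Kelley (@instTopologicalSpaceProd X X T T), T] (fun p : X × X => p.1 + p.2) ∧
  Continuous[Kelley (@instTopologicalSpaceProd ℝ X inferInstance T), T]
    (fun p : ℝ × X => p.1 • p.2)

/-- Sequential completeness of a topologized additive group: every Cauchy sequence converges. -/
def SeqComplete {X : Type*} [AddCommGroup X] (U : TopologicalSpace X) : Prop :=
  ∀ u : ℕ → X, (∀ V ∈ @nhds X U 0, ∃ N : ℕ, ∀ m ≥ N, ∀ n ≥ N, u m - u n ∈ V) →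
    ∃ x : X, Filter.Tendsto u Filter.atTop (@nhds X U x)

/-- Seip-convenient space: a compactly generated real vector space whose topology is the
Kelleyfication of a sequentially complete Hausdorff locally convex vector topology. -/
def IsSeipConvenient {X : Type*} [AddCommGroup X] [Module ℝ X] (T : TopologicalSpace X) : Prop :=
  IsCGVS T ∧ ∃ U : TopologicalSpace X,
    @IsTopologicalAddGroup X U _ ∧ @ContinuousSMul ℝ X _ _ U ∧
    @LocallyConvexSpace ℝ X _ _ _ _ U ∧ @T2Space X U ∧ SeqComplete U ∧ T = Kelley U

/-- The compact-open topology on the full function space, generated by the usual subbasis. -/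
def coTop {X Y : Type*} (tX : TopologicalSpace X) (tY : TopologicalSpace Y) :
    TopologicalSpace (X → Y) :=
  TopologicalSpace.generateFrom
    {S | ∃ (K : Set X) (V : Set Y), @IsCompact X tX K ∧ tY.IsOpen V ∧ S = {f | f '' K ⊆ V}}

/-- `γ` is Riemann integrable to `x` on `[a,b]` with respect to the topology `T`. -/
def RiemannIntegrableTo {E : Type*} [AddCommGroup E] [Module ℝ E]
    (T : TopologicalSpace E) (a b : ℝ) (γ : ℝ → E) (x : E) : Prop :=
  ∀ V ∈ @nhds E T x, ∃ δ : ℝ, 0 < δ ∧ ∀ (k : ℕ) (t s : ℕ → ℝ),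
    t 0 = a → t k = b → (∀ i < k, t i ≤ t (i + 1)) →
    (∀ i < k, t (i + 1) - t i < δ) →
    (∀ i < k, t i ≤ s i ∧ s i ≤ t (i + 1)) →
    (∑ i ∈ Finset.range k, (t (i + 1) - t i) • γ (s i)) ∈ V

/-- `c` is differentiable to `x` at `t₀` (within `J`) with respect to the topology `T`. -/
def DiffTo {E : Type*} [AddCommGroup E] [Module ℝ E] (T : TopologicalSpace E)
    (J : Set ℝ) (c : ℝ → E) (t₀ : ℝ) (x : E) : Prop :=
  ∀ V ∈ @nhds E T x, ∃ δ : ℝ, 0 < δ ∧ ∀ t : ℝ, t₀ + t ∈ J → 0 < |t| → |t| < δ →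
    t⁻¹ • (c (t₀ + t) - c t₀) ∈ V

/-! The Kelleyfication of a topology only depends on its compact sets and the subspace topologies
they carry. The product of the Kelleyfications is finer than the product topology, so it has no
more compact sets. Conversely, a compact set of the product projects onto compact sets of the
factors, and on a compact set a Kelleyfication induces the original topology; hence the two
products induce the same topology on every compact set, and so they also have the same compact
sets. -/

section

variable {X : Type*}

lemma kelley_le_self (T : TopologicalSpace X) : Kelley T ≤ T :=
  TopologicalSpace.le_def.mpr fun s hs _ _ => ⟨s, hs, rfl⟩

lemma isOpen_kelley_iff (T : TopologicalSpace X) (s : Set X) :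
    IsOpen[Kelley T] s ↔
      ∀ K : Set X, @IsCompact X T K → IsOpen[T.induced ((↑) : K → X)] ((↑) ⁻¹' s) :=
  forall₂_congr fun K _ => by
    simp only [isOpen_induced_iff, Subtype.preimage_coe_eq_preimage_coe_iff, inter_comm K]
    exact exists_congr fun V => and_congr Iff.rfl eq_comm

lemma induced_kelley_of_range_subset {W : Type*} (T : TopologicalSpace X) {g : W → X} {K : Set X}
    (hK : @IsCompact X T K) (hg : range g ⊆ K) : (Kelley T).induced g = T.induced g := by
  refine le_antisymm (induced_mono (kelley_le_self T)) (TopologicalSpace.le_def.mpr ?_)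
  rintro _ ⟨s, hs, rfl⟩
  obtain ⟨V, hV, hsV⟩ := hs K hK
  refine ⟨V, hV, ?_⟩
  have hgK : g ⁻¹' K = univ := preimage_eq_univ_iff.mpr hg
  simpa only [preimage_inter, hgK, inter_univ] using congr_arg (g ⁻¹' ·) hsV.symm

lemma isCompact_of_induced_eq {t₁ t₂ : TopologicalSpace X} {K : Set X}
    (h : t₁.induced ((↑) : K → X) = t₂.induced (↑)) (hK : @IsCompact X t₁ K) :
    @IsCompact X t₂ K := by
  have hK' : @CompactSpace K (t₁.induced (↑)) := (@isCompact_iff_compactSpace X t₁ K).mp hK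
  rw [h] at hK'
  exact (@isCompact_iff_compactSpace X t₂ K).mpr hK'

lemma kelley_eq_of_le_of_induced_eq {t₁ t₂ : TopologicalSpace X} (hle : t₂ ≤ t₁)
    (h : ∀ K : Set X, @IsCompact X t₁ K → t₂.induced ((↑) : K → X) = t₁.induced (↑)) :
    Kelley t₁ = Kelley t₂ := by
  have hcompact (K : Set X) : @IsCompact X t₁ K ↔ @IsCompact X t₂ K :=
    ⟨fun hK => isCompact_of_induced_eq (h K hK).symm hK,
      fun hK => by simpa using @IsCompact.image X X t₂ t₁ K id hK (continuous_id_iff_le.mpr hle)⟩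
  refine TopologicalSpace.ext <| funext fun s => propext ?_
  simp only [isOpen_kelley_iff]
  exact ⟨fun hs K hK => h K ((hcompact K).mpr hK) ▸ hs K ((hcompact K).mpr hK),
    fun hs K hK => (h K hK).symm ▸ hs K ((hcompact K).mp hK)⟩

lemma range_comp_val_subset_image {Y : Type*} (f : X → Y) (K : Set X) :
    range (f ∘ ((↑) : K → X)) ⊆ f '' K := by
  rw [range_comp, Subtype.range_coe]

lemma kelley_prod {Y : Type*} [tX : TopologicalSpace X] [tY : TopologicalSpace Y] :
    Kelley (inferInstance : TopologicalSpace (X × Y)) =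
      Kelley (@instTopologicalSpaceProd X Y (Kelley tX) (Kelley tY)) := by
  refine kelley_eq_of_le_of_induced_eq
    (inf_le_inf (induced_mono (kelley_le_self tX)) (induced_mono (kelley_le_self tY)))
    fun K hK => ?_
  change ((Kelley tX).induced Prod.fst ⊓ (Kelley tY).induced Prod.snd).induced ((↑) : K → X × Y) =
    (tX.induced Prod.fst ⊓ tY.induced Prod.snd).induced (↑)
  simp only [induced_inf, induced_compose,
    induced_kelley_of_range_subset tX (hK.image continuous_fst) (range_comp_val_subset_image _ K),
    induced_kelley_of_range_subset tY (hK.image continuous_snd) (range_comp_val_subset_image _ K)]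

lemma kelley_pi {ι : Type*} {Z : ι → Type*} [t : ∀ i, TopologicalSpace (Z i)] :
    Kelley (inferInstance : TopologicalSpace (∀ i, Z i)) =
      Kelley (@Pi.topologicalSpace ι Z fun i => Kelley (t i)) := by
  refine kelley_eq_of_le_of_induced_eq (iInf_mono fun i => induced_mono (kelley_le_self (t i)))
    fun K hK => ?_
  change (⨅ i, (Kelley (t i)).induced (Function.eval i)).induced ((↑) : K → ∀ i, Z i) =
    (⨅ i, (t i).induced (Function.eval i)).induced (↑)
  simp only [induced_iInf, induced_compose]
  exact iInf_congr fun i => induced_kelley_of_range_subset (t i) (hK.image (continuous_apply i))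
    (range_comp_val_subset_image _ K)

end

/-- The Kelleyfication of a product topology equals the Kelleyfication of the
product of the Kelleyfications, both for binary products and for arbitrary (Tihonov)
products of families of topologies. -/
theorem kelley_prod_kelley {X Y : Type*} (T : TopologicalSpace X) (U : TopologicalSpace Y)
    {I : Type*} {Z : I → Type*} (Ts : ∀ i, TopologicalSpace (Z i)) :
    Kelley (@instTopologicalSpaceProd X Y T U) =
      Kelley (@instTopologicalSpaceProd X Y (Kelley T) (Kelley U)) ∧
    Kelley (@Pi.topologicalSpace I Z Ts) =
      Kelley (@Pi.topologicalSpace I Z fun i => Kelley (Ts i)) :=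
  ⟨@kelley_prod X Y T U, @kelley_pi I Z Ts⟩
end

section
/- Let E = (X, T) be a real compactly generated vector space and let S be a vector subspace of X which is T-closed. Then S, equipped with the subspace topology T ∩ S and the restricted linear operations, is again a real compactly generated vector space. If moreover E is Seip-convenient, then so is this subspace: there is a locally convex topology on S making it a sequentially complete Hausdorff locally convex topological vector space whose Kelleyfication is T ∩ S. -/
open Set Filter Topology

/- For a `kT`-closed set `S`, the Kelleyfication of the subspace topology on `S` is the subspace
topology of `kT`: a compact `K` meets `S` in the compact set `K \ V₀`, where `V₀` is `T`-open with
`Sᶜ ∩ K = V₀ ∩ K`, so a `k`-open `A ⊆ S` extends to the `kT`-open set `A ∪ Sᶜ`. Hence closed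
subspaces of compactly generated spaces are compactly generated, and the linear operations restrict
because `k` is functorial. In the Seip case the induced locally convex topology works: `S` is
sequentially closed for it, since a convergent sequence together with its limit is compact. -/

section Kelley

variable {X Y : Type*} {t : TopologicalSpace X}

theorem isOpen_kelley_iff_s3 {U : Set X} :
    IsOpen[Kelley t] U ↔
      ∀ K : Set X, @IsCompact X t K → ∃ V : Set X, IsOpen[t] V ∧ ∀ x ∈ K, (x ∈ U ↔ x ∈ V) := by
  refine forall₂_congr fun K _ => exists_congr fun V => and_congr_right fun _ => ?_
  simp only [Set.ext_iff, mem_inter_iff, and_congr_left_iff]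

theorem Continuous.kelley {s : TopologicalSpace Y} {f : X → Y} (hf : Continuous[t, s] f) :
    Continuous[Kelley t, Kelley s] f := by
  refine continuous_def.mpr fun U hU => isOpen_kelley_iff_s3.mpr fun K hK => ?_
  obtain ⟨V, hV, hUV⟩ := isOpen_kelley_iff_s3.mp hU (f '' K) (@IsCompact.image X Y t s K f hK hf)
  exact ⟨f ⁻¹' V, continuous_def.mp hf V hV, fun x hx => hUV (f x) (mem_image_of_mem f hx)⟩

theorem Filter.Tendsto.kelley {u : ℕ → X} {x : X} (h : Tendsto u atTop (@nhds X t x)) :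
    Tendsto u atTop (@nhds X (Kelley t) x) := by
  have hK : @IsCompact X t (insert x (range u)) := @Tendsto.isCompact_insert_range X t u x h
  refine (@tendsto_nhds _ (Kelley t) _ _ _ _).mpr fun W hW hxW => ?_
  obtain ⟨V, hV, hWV⟩ := isOpen_kelley_iff_s3.mp hW _ hK
  filter_upwards [tendsto_nhds.mp h V hV ((hWV x (mem_insert x _)).mp hxW)] with n hn
  exact (hWV (u n) (mem_insert_of_mem _ (mem_range_self n))).mpr hn

theorem IsClosed.isSeqClosed_of_kelley {S : Set X} (hS : IsClosed[Kelley t] S) :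
    @IsSeqClosed X t S :=
  fun _ _ hu hx => @IsClosed.isSeqClosed X (Kelley t) S hS _ _ hu hx.kelley

theorem kelley_induced_of_isClosed {S : Set X} (hS : IsClosed[Kelley t] S) :
    Kelley (t.induced (Subtype.val : S → X)) = (Kelley t).induced Subtype.val := by
  refine le_antisymm (continuous_iff_le_induced.mp (continuous_induced_dom.kelley)) ?_
  intro A hA
  refine (isOpen_induced_iff (t := Kelley t)).mpr ⟨Subtype.val '' A ∪ Sᶜ, ?_, by ext x; simp⟩
  refine isOpen_kelley_iff_s3.mpr fun K hK => ?_
  obtain ⟨V₀, hV₀, hSV₀⟩ := isOpen_kelley_iff_s3.mp hS.isOpen_compl K hK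
  have hSK : S ∩ K = K \ V₀ := by
    ext x
    have := hSV₀ x
    simp only [mem_inter_iff, Set.mem_sdiff, mem_compl_iff] at this ⊢
    tauto
  have hKS : IsCompact (Subtype.val ⁻¹' K : Set S) := by
    rw [Subtype.isCompact_iff, Subtype.image_preimage_coe, hSK]
    exact hK.diff hV₀
  obtain ⟨V, hV, hAV⟩ := isOpen_kelley_iff_s3.mp hA _ hKS
  obtain ⟨W, hW, rfl⟩ := isOpen_induced_iff.mp hV
  refine ⟨W ∪ V₀, hW.union hV₀, fun x hx => ?_⟩
  by_cases hxS : x ∈ S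
  · have hxV₀ : x ∉ V₀ := fun h => (hSV₀ x hx).mpr h hxS
    simpa [hxS, hxV₀] using hAV ⟨x, hxS⟩ hx
  · simp [hxS, (hSV₀ x hx).mp hxS]

end Kelley

theorem IsCG.induced_of_isClosed {X : Type*} {T : TopologicalSpace X} (hT : IsCG T) {S : Set X}
    (hS : IsClosed[T] S) : IsCG (T.induced (Subtype.val : S → X)) := by
  obtain ⟨hT2, hkT⟩ := hT
  refine ⟨inferInstanceAs (T2Space S), ?_⟩
  rw [kelley_induced_of_isClosed (hkT.symm ▸ hS), hkT]

theorem SeqComplete.induced_of_isSeqClosed {X S : Type*} [AddCommGroup X] [SetLike S X]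
    [AddSubgroupClass S X] {U : TopologicalSpace X} (hU : SeqComplete U) {A : S}
    (hA : @IsSeqClosed X U A) : SeqComplete (U.induced (Subtype.val : A → X)) := by
  intro u hu
  have hcauchy : ∀ V ∈ @nhds X U 0, ∃ N, ∀ m ≥ N, ∀ n ≥ N, (u m : X) - u n ∈ V := fun V hV =>
    hu _ (by rw [nhds_induced]; exact preimage_mem_comap hV)
  obtain ⟨x, hx⟩ := hU _ hcauchy
  exact ⟨⟨x, hA (fun n => (u n).2) hx⟩, by rw [nhds_induced]; exact tendsto_comap_iff.mpr hx⟩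

section Submodule

variable {X : Type*} [AddCommGroup X] [Module ℝ X] {T : TopologicalSpace X}

theorem IsCGVS.submodule (hT : IsCGVS T) (S : Submodule ℝ X) (hS : IsClosed[T] (S : Set X)) :
    IsCGVS (T.induced (Subtype.val : S → X)) := by
  obtain ⟨hCG, hadd, hsmul⟩ := hT
  refine ⟨hCG.induced_of_isClosed hS, continuous_induced_rng.mpr ?_,
    continuous_induced_rng.mpr ?_⟩
  · have hval : Continuous (Prod.map (Subtype.val : S → X) (Subtype.val : S → X)) :=
      continuous_subtype_val.prodMap continuous_subtype_val
    exact (@Continuous.comp _ _ _ (_) (_) T _ _ hadd hval.kelley :)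
  · have hval : Continuous (Prod.map (id : ℝ → ℝ) (Subtype.val : S → X)) :=
      continuous_id.prodMap continuous_subtype_val
    exact (@Continuous.comp _ _ _ (_) (_) T _ _ hsmul hval.kelley :)

theorem IsSeipConvenient.submodule (hT : IsSeipConvenient T) (S : Submodule ℝ X)
    (hS : IsClosed[T] (S : Set X)) : IsSeipConvenient (T.induced (Subtype.val : S → X)) := by
  obtain ⟨hCGVS, U, hAG, hSM, hLC, hT2, hSC, rfl⟩ := hT
  exact ⟨hCGVS.submodule S hS, U.induced Subtype.val, topologicalAddGroup_induced S.subtype,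
    continuousSMul_induced S.subtype, LocallyConvexSpace.induced S.subtype,
    inferInstanceAs (T2Space S), hSC.induced_of_isSeqClosed hS.isSeqClosed_of_kelley,
    (kelley_induced_of_isClosed hS).symm⟩

end Submodule

/-- A closed vector subspace of a real compactly generated vector space is
again a real compactly generated vector space with the subspace topology and the restricted
linear operations; and if the ambient space is Seip-convenient, so is the subspace. -/
theorem cgvs_closed_submodule {X : Type*} [AddCommGroup X] [Module ℝ X]
    (T : TopologicalSpace X) (hT : IsCGVS T) (S : Submodule ℝ X)
    (hS : @IsClosed X T (S : Set X)) :
    IsCGVS (TopologicalSpace.induced (Subtype.val : S → X) T) ∧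
    (IsSeipConvenient T →
      IsSeipConvenient (TopologicalSpace.induced (Subtype.val : S → X) T)) :=
  ⟨hT.submodule S hS, fun h => h.submodule S hS⟩
end

section
/- Let (X, T) be a Hausdorff topological space and (Y, U) any topological space, let C(X,Y) be the set of continuous maps X → Y with the compact-open topology F, and let W = k(T × F) be the Kelleyfication of the product topology on X × C(X,Y). Then the evaluation map ev : X × C(X,Y) → Y, (x, f) ↦ f(x), is continuous from W to U. -/
open Set Filter Topology

/-! On a compact set `K ⊆ X × C(X, Y)` the evaluation only sees points of the compact set
`Prod.fst '' K`, which is Hausdorff and hence locally compact, so there evaluation is jointly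
continuous for the compact-open topology. Continuity on every compact set is precisely
continuity for the Kelleyfication. -/

theorem continuous_kelley_of_continuousOn {Z W : Type*} [tZ : TopologicalSpace Z]
    [TopologicalSpace W] {f : Z → W} (hf : ∀ K, IsCompact K → ContinuousOn f K) :
    Continuous[Kelley tZ, _] f :=
  continuous_def.mpr fun V hV K hK => continuousOn_iff'.mp (hf K hK) V hV

theorem ContinuousMap.continuousOn_eval_prod_univ_of_isCompact {X Y : Type*}
    [TopologicalSpace X] [TopologicalSpace Y] [T2Space X] {K : Set X} (hK : IsCompact K) :
    ContinuousOn (fun q : X × C(X, Y) => q.2 q.1) (K ×ˢ univ) := by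
  have : CompactSpace K := isCompact_iff_compactSpace.mp hK
  have hfst : Continuous fun q : ↥(K ×ˢ (univ : Set C(X, Y))) => (⟨q.1.1, q.2.1⟩ : K) := by
    fun_prop
  have hrestrict : Continuous fun q : ↥(K ×ˢ (univ : Set C(X, Y))) => q.1.2.restrict K :=
    (continuous_restrict K).comp (continuous_snd.comp continuous_subtype_val)
  exact continuousOn_iff_continuous_domRestrict.mpr (continuous_eval.comp (hrestrict.prodMk hfst))

/-- For a Hausdorff space `X` and any space `Y`, the evaluation map
`X × C(X,Y) → Y` is continuous from the Kelleyfication of the product of the topology of `X`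
with the compact-open topology. -/
theorem eval_continuous_kelley {X Y : Type*} [tX : TopologicalSpace X]
    [tY : TopologicalSpace Y] [T2Space X] :
    Continuous[Kelley (@instTopologicalSpaceProd X C(X, Y) tX ContinuousMap.compactOpen), tY]
      (fun p : X × C(X, Y) => p.2 p.1) :=
  continuous_kelley_of_continuousOn fun _ hK =>
    (ContinuousMap.continuousOn_eval_prod_univ_of_isCompact (hK.image continuous_fst)).mono
      fun _ hp => ⟨mem_image_of_mem _ hp, mem_univ _⟩
end

section
/- Let (Ω, 𝒰), (T, 𝒯), (T₁, 𝒯₁) be topological spaces such that 𝒰 equals its own Kelleyfication (k𝒰 = 𝒰) and 𝒯 is locally compact, and let f : Ω × T → T₁ be a function defined on all of Ω × T. If for every 𝒰-compact set K ⊆ Ω the restriction of f to K × T is continuous with respect to the (subspace of the) product topology 𝒰 × 𝒯 and 𝒯₁, then f itself is continuous from the product topology 𝒰 × 𝒯 to 𝒯₁. -/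
open Set Filter Topology

/- Curry `f` to `F : Ω → C(T, T₁)`, with the compact-open topology on `C(T, T₁)`. On each compact
`K ⊆ Ω`, `F` restricts to the curried form of the continuous map `K × T → T₁`, so it is continuous
there; since `Ω` is a k-space, `F` is continuous. Local compactness of `T` makes uncurrying
preserve continuity, so `f` is continuous. -/

theorem LocCompact.locallyCompactSpace {Y : Type*} [t : TopologicalSpace Y] (ht : LocCompact t) :
    LocallyCompactSpace Y := by
  refine ⟨fun y n hn => ?_⟩
  obtain ⟨V, hVn, hVopen, hyV⟩ := mem_nhds_iff.mp hn
  obtain ⟨K, U, hyU, hUopen, hUK, hKV, hK⟩ := ht y V hVopen hyV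
  exact ⟨K, mem_of_superset (IsOpen.mem_nhds hUopen hyU) hUK, hKV.trans hVn, hK⟩

theorem isOpen_of_kelley_eq {X : Type*} [u : TopologicalSpace X] (hu : Kelley u = u) {s : Set X}
    (hs : ∀ K : Set X, IsCompact K → IsOpen ((↑) ⁻¹' s : Set K)) : IsOpen s := by
  rw [← hu]
  intro K hK
  obtain ⟨V, hV, hVs⟩ := isOpen_induced_iff.mp (hs K hK)
  refine ⟨V, hV, ?_⟩
  rw [inter_comm, inter_comm V]
  exact (Subtype.preimage_coe_eq_preimage_coe_iff.mp hVs).symm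

theorem continuous_of_kelley_eq {X Y : Type*} [u : TopologicalSpace X] [TopologicalSpace Y]
    (hu : Kelley u = u) {g : X → Y} (hg : ∀ K : Set X, IsCompact K → Continuous fun x : K => g x) :
    Continuous g :=
  continuous_def.mpr fun _ hW => isOpen_of_kelley_eq hu fun K hK => hW.preimage (hg K hK)

/-- If `𝒰` equals its Kelleyfication, `𝒯` is locally compact, and
`f : Ω × T → T₁` is continuous on `K × T` for every `𝒰`-compact `K`, then `f` is continuous
on all of `Ω × T` for the product topology. -/
theorem continuous_of_continuous_on_compacts {Ω T T₁ : Type*} [u : TopologicalSpace Ω]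
    [t : TopologicalSpace T] [t₁ : TopologicalSpace T₁]
    (hu : Kelley u = u) (ht : LocCompact t) (f : Ω × T → T₁)
    (h : ∀ K : Set Ω, IsCompact K → Continuous fun p : K × T => f (p.1.1, p.2)) :
    Continuous f := by
  have := ht.locallyCompactSpace
  have hslice : ∀ ω, Continuous fun τ => f (ω, τ) := fun ω =>
    (h {ω} isCompact_singleton).comp (Continuous.prodMk_right (⟨ω, rfl⟩ : ({ω} : Set Ω)))
  let F : Ω → C(T, T₁) := fun ω => ⟨fun τ => f (ω, τ), hslice ω⟩
  have hF : Continuous F := continuous_of_kelley_eq hu fun K hK =>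
    ContinuousMap.continuous_of_continuous_uncurry _ (h K hK)
  exact ContinuousMap.continuous_uncurry_of_continuous ⟨F, hF⟩
end

section
/- Let E be a real vector space equipped with an almost compactly generated topology τE (that is, τE equals its Kelleyfication), and let F₁ be a sequentially complete Hausdorff real locally convex topological vector space. Then the vector space of continuous linear maps E → F₁, endowed with the (locally convex) topology of uniform convergence on τE-compact subsets of E, is sequentially complete. -/
/-!
The limit `ℓ` is formed pointwise, using sequential completeness of `F₁`, and is linear as a
pointwise limit of linear maps. On a compact set `K` the sequence is uniformly Cauchy and converges
pointwise, hence converges uniformly, so `ℓ` is continuous on every compact set. Since the topology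
of `E` coincides with its Kelleyfication, a map continuous on every compact set is continuous.
-/

open Set Filter Topology

theorem continuous_of_kelley_eq_s11 {X Y : Type*} [tX : TopologicalSpace X] [TopologicalSpace Y]
    (hX : Kelley tX = tX) {f : X → Y} (hf : ∀ K, IsCompact K → ContinuousOn f K) :
    Continuous f := by
  refine continuous_def.2 fun U hU => ?_
  rw [← hX]
  exact fun K hK => continuousOn_iff'.1 (hf K hK) U hU

section IsUniformAddGroup

variable {α G : Type*} [AddCommGroup G] [UniformSpace G] [IsUniformAddGroup G]

theorem uniformCauchySeqOn_atTop_iff_sub_mem {F : ℕ → α → G} {s : Set α} :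
    UniformCauchySeqOn F atTop s ↔
      ∀ V ∈ 𝓝 (0 : G), ∃ N, ∀ m ≥ N, ∀ n ≥ N, ∀ x ∈ s, F m x - F n x ∈ V := by
  rw [IsTopologicalAddGroup.uniformCauchySeqOn_iff _ _ _ IsUniformAddGroup.rightUniformSpace_eq]
  simp only [prod_atTop_atTop_eq, eventually_atTop_prod_self']
  exact forall₂_congr fun V _ => exists_congr fun N =>
    ⟨fun h m hm n hn => h n hn m hm, fun h m hm n hn => h n hn m hm⟩

theorem SeqComplete.exists_tendsto_of_cauchySeq
    (hG : SeqComplete (UniformSpace.toTopologicalSpace : TopologicalSpace G)) {u : ℕ → G}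
    (hu : CauchySeq u) : ∃ x, Tendsto u atTop (𝓝 x) := by
  refine hG u fun V hV => ?_
  have hV' := ((IsUniformAddGroup.cauchy_map_iff_tendsto atTop u).1 hu).2 hV
  rw [mem_map, prod_atTop_atTop_eq] at hV'
  exact eventually_atTop_prod_self'.1 hV'

end IsUniformAddGroup

theorem clm_compact_convergence_seqComplete_general {E F₁ : Type*}
    [AddCommGroup E] [Module ℝ E] [tE : TopologicalSpace E]
    [AddCommGroup F₁] [Module ℝ F₁] [t : TopologicalSpace F₁]
    [IsTopologicalAddGroup F₁] [ContinuousSMul ℝ F₁] [T2Space F₁]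
    (hE : Kelley tE = tE) (hF : SeqComplete t)
    (u : ℕ → E →L[ℝ] F₁)
    (hu : ∀ K : Set E, IsCompact K → ∀ V ∈ nhds (0 : F₁), ∃ N : ℕ, ∀ m ≥ N, ∀ n ≥ N,
      ∀ x ∈ K, u m x - u n x ∈ V) :
    ∃ ℓ : E →L[ℝ] F₁, ∀ K : Set E, IsCompact K → ∀ V ∈ nhds (0 : F₁),
      ∀ᶠ n in Filter.atTop, ∀ x ∈ K, u n x - ℓ x ∈ V := by
  let _ : UniformSpace F₁ := IsTopologicalAddGroup.rightUniformSpace F₁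
  have : IsUniformAddGroup F₁ := isUniformAddGroup_of_addCommGroup
  have hcauchy (K : Set E) (hK : IsCompact K) : UniformCauchySeqOn (fun n => ⇑(u n)) atTop K :=
    uniformCauchySeqOn_atTop_iff_sub_mem.2 (hu K hK)
  choose f hf using fun x =>
    hF.exists_tendsto_of_cauchySeq ((hcauchy {x} isCompact_singleton).cauchySeq rfl)
  let ℓ : E →ₗ[ℝ] F₁ :=
    linearMapOfTendsto f (fun n => (u n : E →ₗ[ℝ] F₁)) (tendsto_pi_nhds.2 hf)
  have hunif (K : Set E) (hK : IsCompact K) : TendstoUniformlyOn (fun n => ⇑(u n)) ℓ atTop K :=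
    (hcauchy K hK).tendstoUniformlyOn_of_tendsto fun x _ => hf x
  have hℓ : Continuous ℓ := continuous_of_kelley_eq_s11 hE fun K hK =>
    (hunif K hK).continuousOn (.of_forall fun n => (u n).continuous.continuousOn)
  exact ⟨⟨ℓ, hℓ⟩, fun K hK =>
    (IsTopologicalAddGroup.tendstoUniformlyOn_iff _ _ _ _ rfl).1 (hunif K hK)⟩

/-- If `E` carries an almost compactly generated topology and `F₁` is a
sequentially complete Hausdorff real locally convex topological vector space, then the space
of continuous linear maps `E → F₁` with the topology of uniform convergence on compact sets
is sequentially complete: every sequence of continuous linear maps that is Cauchy uniformly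
on every compact set converges, uniformly on every compact set, to a continuous linear map. -/
theorem clm_compact_convergence_seqComplete {E F₁ : Type*}
    [AddCommGroup E] [Module ℝ E] [tE : TopologicalSpace E]
    [AddCommGroup F₁] [Module ℝ F₁] [t : TopologicalSpace F₁]
    [IsTopologicalAddGroup F₁] [ContinuousSMul ℝ F₁] [LocallyConvexSpace ℝ F₁] [T2Space F₁]
    (hE : Kelley tE = tE) (hF : SeqComplete t)
    (u : ℕ → E →L[ℝ] F₁)
    (hu : ∀ K : Set E, IsCompact K → ∀ V ∈ nhds (0 : F₁), ∃ N : ℕ, ∀ m ≥ N, ∀ n ≥ N,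
      ∀ x ∈ K, u m x - u n x ∈ V) :
    ∃ ℓ : E →L[ℝ] F₁, ∀ K : Set E, IsCompact K → ∀ V ∈ nhds (0 : F₁),
      ∀ᶠ n in Filter.atTop, ∀ x ∈ K, u n x - ℓ x ∈ V :=
  clm_compact_convergence_seqComplete_general (tE := tE) (t := t) hE hF u hu
end

section
/- Let F be a real compactly generated vector space with topology τF and let G be a real Hausdorff locally convex topological vector space with topology τG. If a sequence (ℓₙ) of continuous linear maps F → G converges to a continuous linear map ℓ uniformly on every τF-compact set (i.e. converges in the topology of uniform convergence on compact subsets of F), then (ℓₙ) converges to ℓ in the Kelleyfication of the subspace topology induced, on the set of maps F → G that are linear and continuous into (G, k τG), by the compact-open topology associated with τF and the Kelleyfication k τG. -/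
open Set Filter Topology

/-!
If `ℓₙ → ℓ` uniformly on a compact `K`, then `ℓₙ[K]` eventually lies in every open set `W ⊇ ℓ[K]`,
because `U₀ + ℓ[K] ⊆ W` for some neighbourhood `U₀` of `0`. Hence `ℓ[K] ∪ ⋃ₙ ℓₙ[K]` is compact, and
on it every `k τG`-open set agrees with a `τG`-open one; this gives convergence in the compact-open
topology built from `k τG`. A convergent sequence together with its limit is compact, so by the
same trace argument the convergence survives the final Kelleyfication.
-/

theorem isCompact_union_iUnion_of_eventually_subset {X : Type*} [TopologicalSpace X]
    {C : Set X} {s : ℕ → Set X} (hC : IsCompact C) (hs : ∀ n, IsCompact (s n))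
    (h : ∀ W, IsOpen W → C ⊆ W → ∀ᶠ n in atTop, s n ⊆ W) :
    IsCompact (C ∪ ⋃ n, s n) := by
  classical
  refine isCompact_of_finite_subcover fun U hU hcover => ?_
  obtain ⟨t₀, ht₀⟩ := hC.elim_finite_subcover U hU (subset_union_left.trans hcover)
  obtain ⟨N, hN⟩ := eventually_atTop.mp (h _ (isOpen_biUnion fun i _ => hU i) ht₀)
  have hinit : IsCompact (⋃ n ∈ Finset.range N, s n) :=
    (Finset.range N).isCompact_biUnion fun n _ => hs n
  obtain ⟨t₁, ht₁⟩ := hinit.elim_finite_subcover U hU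
    (iUnion₂_subset fun n _ => (subset_iUnion s n).trans (subset_union_right.trans hcover))
  refine ⟨t₀ ∪ t₁, ?_⟩
  rw [Finset.set_biUnion_union]
  refine union_subset (ht₀.trans subset_union_left) (iUnion_subset fun n => ?_)
  rcases lt_or_ge n N with hn | hn
  · exact (subset_biUnion_of_mem (u := s) (Finset.mem_range.2 hn)).trans
      (ht₁.trans subset_union_right)
  · exact (hN n hn).trans subset_union_left

theorem eventually_subset_of_isOpen_kelley {X ι : Type*} [t : TopologicalSpace X]
    {l : Filter ι} {C V : Set X} {s : ι → Set X} (hcpt : IsCompact (C ∪ ⋃ i, s i))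
    (h : ∀ W, IsOpen W → C ⊆ W → ∀ᶠ i in l, s i ⊆ W)
    (hV : IsOpen[Kelley t] V) (hCV : C ⊆ V) : ∀ᶠ i in l, s i ⊆ V := by
  obtain ⟨W, hW, hVW⟩ := hV _ hcpt
  have hCW : C ⊆ W := fun x hx => ((Set.ext_iff.1 hVW x).1 ⟨hCV hx, .inl hx⟩).1
  filter_upwards [h W hW hCW] with i hi x hx
  exact ((Set.ext_iff.1 hVW x).2 ⟨hi hx, .inr (mem_iUnion_of_mem i hx)⟩).1

theorem tendsto_nhds_kelley {X : Type*} [t : TopologicalSpace X] {u : ℕ → X} {x : X}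
    (hu : Tendsto u atTop (𝓝 x)) : Tendsto u atTop (@nhds X (Kelley t) x) := by
  refine (@tendsto_nhds X (Kelley t) ..).2 fun V hV hxV => ?_
  have hcpt : IsCompact ({x} ∪ ⋃ n, {u n}) := by
    rw [iUnion_singleton_eq_range, ← insert_eq]
    exact hu.isCompact_insert_range
  have hnear (W : Set X) (hW : IsOpen W) (hxW : {x} ⊆ W) : ∀ᶠ n in atTop, {u n} ⊆ W := by
    simpa only [singleton_subset_iff] using
      hu.eventually_mem (hW.mem_nhds (singleton_subset_iff.1 hxW))
  simpa using eventually_subset_of_isOpen_kelley hcpt hnear hV (singleton_subset_iff.2 hxV)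

theorem eventually_image_subset_of_uniform {X G ι : Type*} [AddGroup G] [TopologicalSpace G]
    [IsTopologicalAddGroup G] {f : X → G} {u : ι → X → G} {l : Filter ι} {K : Set X}
    {W : Set G} (hfK : IsCompact (f '' K)) (hW : IsOpen W) (hKW : f '' K ⊆ W)
    (hconv : ∀ U ∈ 𝓝 (0 : G), ∀ᶠ i in l, ∀ x ∈ K, u i x - f x ∈ U) :
    ∀ᶠ i in l, u i '' K ⊆ W := by
  obtain ⟨U, hU, hUK⟩ := compact_open_separated_add_left hfK hW hKW
  filter_upwards [hconv U hU] with i hi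
  rintro _ ⟨x, hx, rfl⟩
  simpa using hUK (add_mem_add (hi x hx) (mem_image_of_mem f hx))

theorem tendsto_nhds_coTop_iff {X Y ι : Type*} [tX : TopologicalSpace X] [tY : TopologicalSpace Y]
    {u : ι → X → Y} {f : X → Y} {l : Filter ι} :
    Tendsto u l (@nhds _ (coTop tX tY) f) ↔
      ∀ K, IsCompact K → ∀ V, IsOpen V → f '' K ⊆ V → ∀ᶠ i in l, u i '' K ⊆ V := by
  rw [coTop, TopologicalSpace.tendsto_nhds_generateFrom_iff]
  constructor
  · exact fun h K hK V hV hfV => h _ ⟨K, V, hK, hV, rfl⟩ hfV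
  · rintro h _ ⟨K, V, hK, hV, rfl⟩ hfV
    exact h K hK V hV hfV

theorem tendsto_kelley_of_uniform_on_compacts_general {F G : Type*}
    [AddCommGroup F] [Module ℝ F] [tF : TopologicalSpace F]
    [AddCommGroup G] [Module ℝ G] [tG : TopologicalSpace G]
    [IsTopologicalAddGroup G]
    (u : ℕ → {f : F → G // IsLinearMap ℝ f ∧ Continuous[tF, Kelley tG] f})
    (ℓ : {f : F → G // IsLinearMap ℝ f ∧ Continuous[tF, Kelley tG] f})
    (hcont : ∀ n, Continuous (u n).1) (hℓcont : Continuous ℓ.1)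
    (hconv : ∀ K : Set F, IsCompact K → ∀ V ∈ nhds (0 : G),
      ∀ᶠ n in Filter.atTop, ∀ x ∈ K, (u n).1 x - ℓ.1 x ∈ V) :
    Filter.Tendsto u Filter.atTop
      (@nhds _ (Kelley (TopologicalSpace.induced
        (Subtype.val : {f : F → G // IsLinearMap ℝ f ∧ Continuous[tF, Kelley tG] f} → F → G)
        (coTop tF (Kelley tG)))) ℓ) := by
  refine tendsto_nhds_kelley (t := .induced Subtype.val (coTop tF (Kelley tG))) ?_
  rw [@nhds_induced, tendsto_comap_iff, tendsto_nhds_coTop_iff (tY := Kelley tG)]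
  intro K hK V hV hℓV
  have hℓK : IsCompact (ℓ.1 '' K) := hK.image hℓcont
  have hnear (W : Set G) (hW : IsOpen W) (hKW : ℓ.1 '' K ⊆ W) :
      ∀ᶠ n in atTop, (u n).1 '' K ⊆ W :=
    eventually_image_subset_of_uniform hℓK hW hKW (hconv K hK)
  exact eventually_subset_of_isOpen_kelley
    (isCompact_union_iUnion_of_eventually_subset hℓK (fun n => hK.image (hcont n)) hnear) hnear hV hℓV

/-- Let `F` be a real compactly generated vector space and `G` a real Hausdorff
locally convex topological vector space. If a sequence of continuous linear maps `F → G`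
converges to a continuous linear map `ℓ` uniformly on every compact set, then it converges to
`ℓ` in the Kelleyfication of the subspace topology induced, on the set of maps `F → G` which
are linear and continuous into `(G, Kelley tG)`, by the compact-open topology associated with
`tF` and `Kelley tG`. -/
theorem tendsto_kelley_of_uniform_on_compacts {F G : Type*}
    [AddCommGroup F] [Module ℝ F] [tF : TopologicalSpace F]
    [AddCommGroup G] [Module ℝ G] [tG : TopologicalSpace G]
    [IsTopologicalAddGroup G] [ContinuousSMul ℝ G] [LocallyConvexSpace ℝ G] [T2Space G]
    (hF : IsCGVS tF)
    (u : ℕ → {f : F → G // IsLinearMap ℝ f ∧ Continuous[tF, Kelley tG] f})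
    (ℓ : {f : F → G // IsLinearMap ℝ f ∧ Continuous[tF, Kelley tG] f})
    (hcont : ∀ n, Continuous (u n).1) (hℓcont : Continuous ℓ.1)
    (hconv : ∀ K : Set F, IsCompact K → ∀ V ∈ nhds (0 : G),
      ∀ᶠ n in Filter.atTop, ∀ x ∈ K, (u n).1 x - ℓ.1 x ∈ V) :
    Filter.Tendsto u Filter.atTop
      (@nhds _ (Kelley (TopologicalSpace.induced
        (Subtype.val : {f : F → G // IsLinearMap ℝ f ∧ Continuous[tF, Kelley tG] f} → F → G)
        (coTop tF (Kelley tG)))) ℓ) :=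
  tendsto_kelley_of_uniform_on_compacts_general (tF := tF) (tG := tG) u ℓ hcont hℓcont hconv
end

section
/- Let F₁ be a real locally convex topological vector space with topology 𝒰, and let F be the same vector space equipped with the Kelleyfication k𝒰. Let I = [a,b] with a < b and γ : I → F₁. Then γ is Riemann integrable to x with respect to the topology k𝒰 if and only if γ is Riemann integrable to x with respect to the topology 𝒰. -/
open Set Filter Topology

/-!
A sequence converging to `x` in `T` forms, together with `x`, a `T`-compact set, on which every
`Kelley T`-open set is the trace of a `T`-open set; hence the sequence also converges in
`Kelley T`. So `T` and its Kelleyfication have the same convergence along countably generated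
filters. Riemann integrability is convergence of the Riemann sums along the filter of tagged
partitions with mesh tending to `0`, which is generated by the meshes `1 / (n + 1)`.
-/

namespace Kelley

variable {X : Type*} {T : TopologicalSpace X}

theorem le_self : Kelley T ≤ T := fun s hs _ _ => ⟨s, hs, rfl⟩

theorem tendsto_atTop_nhds_of_tendsto {u : ℕ → X} {x : X} (hu : Tendsto u atTop (@nhds X T x)) :
    Tendsto u atTop (@nhds X (Kelley T) x) := by
  refine @tendsto_nhds X (Kelley T) _ _ _ _ |>.mpr fun W hW hxW => ?_
  obtain ⟨V, hV, hWV⟩ := hW _ (@Tendsto.isCompact_insert_range X T _ _ hu)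
  have hxV : x ∈ V := (hWV.subset ⟨hxW, mem_insert _ _⟩).1
  filter_upwards [hu (@IsOpen.mem_nhds X T _ _ hV hxV)] with n hn
  exact (hWV.symm.subset ⟨hn, mem_insert_of_mem _ ⟨n, rfl⟩⟩).1

theorem tendsto_nhds_iff {α : Type*} {l : Filter α} [l.IsCountablyGenerated] {f : α → X} {x : X} :
    Tendsto f l (@nhds X (Kelley T) x) ↔ Tendsto f l (@nhds X T x) := by
  refine ⟨fun h => h.mono_right (nhds_mono le_self), fun h => ?_⟩
  exact tendsto_iff_seq_tendsto.mpr fun v hv => tendsto_atTop_nhds_of_tendsto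
    (tendsto_iff_seq_tendsto.mp h v hv)

end Kelley

structure TaggedPartition (a b : ℝ) where
  k : ℕ
  t : ℕ → ℝ
  s : ℕ → ℝ
  t_zero : t 0 = a
  t_k : t k = b
  t_le_succ : ∀ i < k, t i ≤ t (i + 1)
  tag_mem : ∀ i < k, t i ≤ s i ∧ s i ≤ t (i + 1)

namespace TaggedPartition

variable {a b : ℝ}

def MeshLT (P : TaggedPartition a b) (δ : ℝ) : Prop :=
  ∀ i < P.k, P.t (i + 1) - P.t i < δ

def riemannSum {E : Type*} [AddCommGroup E] [Module ℝ E] (γ : ℝ → E)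
    (P : TaggedPartition a b) : E :=
  ∑ i ∈ Finset.range P.k, (P.t (i + 1) - P.t i) • γ (P.s i)

theorem MeshLT.mono {P : TaggedPartition a b} {δ δ' : ℝ} (h : P.MeshLT δ) (hδ : δ ≤ δ') :
    P.MeshLT δ' := fun i hi => (h i hi).trans_le hδ

variable (a b) in
def meshFilter : Filter (TaggedPartition a b) :=
  ⨅ n : ℕ, 𝓟 {P | P.MeshLT (1 / (n + 1))}

instance : (meshFilter a b).IsCountablyGenerated := by
  unfold meshFilter; infer_instance

theorem hasBasis_meshFilter :
    (meshFilter a b).HasBasis (fun _ => True) fun n : ℕ => {P | P.MeshLT (1 / (n + 1))} := by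
  refine hasBasis_iInf_principal (Antitone.directed_ge fun m n hmn P hP => hP.mono ?_)
  gcongr

end TaggedPartition

open TaggedPartition in
theorem riemannIntegrableTo_iff_tendsto {E : Type*} [AddCommGroup E] [Module ℝ E]
    {T : TopologicalSpace E} {a b : ℝ} {γ : ℝ → E} {x : E} :
    RiemannIntegrableTo T a b γ x ↔
      Tendsto (riemannSum γ) (meshFilter a b) (@nhds E T x) := by
  rw [hasBasis_meshFilter.tendsto_left_iff]
  refine forall₂_congr fun V _ => ⟨fun ⟨δ, hδ, hV⟩ => ?_, fun ⟨n, _, hV⟩ => ?_⟩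
  · obtain ⟨n, hn⟩ := exists_nat_one_div_lt hδ
    exact ⟨n, trivial, fun P hP => hV P.k P.t P.s P.t_zero P.t_k P.t_le_succ
      (MeshLT.mono hP hn.le) P.tag_mem⟩
  · exact ⟨1 / (n + 1), by positivity, fun k t s h0 hk hmono hmesh htag =>
      hV (x := ⟨k, t, s, h0, hk, hmono, htag⟩) hmesh⟩

theorem riemannIntegrable_kelley_iff_general {X : Type*} [AddCommGroup X] [Module ℝ X]
    (U : TopologicalSpace X)
    (a b : ℝ) (γ : ℝ → X) (x : X) :
    RiemannIntegrableTo (Kelley U) a b γ x ↔ RiemannIntegrableTo U a b γ x := by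
  rw [riemannIntegrableTo_iff_tendsto, riemannIntegrableTo_iff_tendsto, Kelley.tendsto_nhds_iff]

/-- For a real locally convex topological vector space `(X, U)`, a curve is
Riemann integrable to `x` with respect to the Kelleyfication `Kelley U` iff it is Riemann
integrable to `x` with respect to `U` itself. -/
theorem riemannIntegrable_kelley_iff {X : Type*} [AddCommGroup X] [Module ℝ X]
    (U : TopologicalSpace X)
    (h1 : @IsTopologicalAddGroup X U _) (h2 : @ContinuousSMul ℝ X _ _ U)
    (h3 : @LocallyConvexSpace ℝ X _ _ _ _ U)
    (a b : ℝ) (hab : a < b) (γ : ℝ → X) (x : X) :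
    RiemannIntegrableTo (Kelley U) a b γ x ↔ RiemannIntegrableTo U a b γ x :=
  riemannIntegrable_kelley_iff_general U a b γ x
end

section
/- Let F be a sequentially complete real locally convex topological vector space, let I = [a,b] be a compact real interval with a < b, and let γ : I → F be continuous. Then there exists x ∈ F such that γ is Riemann integrable to x on I. -/
open Set Filter Topology

/-!
Two Riemann sums of mesh `< δ` differ by at most `2 (b - a)` times the oscillation of `γ` over
distances `< δ`. For a real function this holds because each sum is within `(b - a)` times the
oscillation of the integral; in `X` it follows by applying the real case to `f ∘ γ` for every
continuous functional `f`, since by Hahn–Banach a closed convex set is the intersection of the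
closed half-spaces containing it. Hence the Riemann sums over the uniform partitions form a
Cauchy sequence, and the same estimate shows that its limit is the integral.
-/

open scoped Pointwise Uniformity

structure IsFineTaggedPartition (a b δ : ℝ) (k : ℕ) (t s : ℕ → ℝ) : Prop where
  first : t 0 = a
  last : t k = b
  mono : ∀ i < k, t i ≤ t (i + 1)
  mesh_lt : ∀ i < k, t (i + 1) - t i < δ
  tag_mem : ∀ i < k, s i ∈ Icc (t i) (t (i + 1))

def riemannSum {E : Type*} [AddCommGroup E] [Module ℝ E] (γ : ℝ → E) (k : ℕ) (t s : ℕ → ℝ) :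
    E :=
  ∑ i ∈ Finset.range k, (t (i + 1) - t i) • γ (s i)

theorem riemannIntegrableTo_iff {E : Type*} [AddCommGroup E] [Module ℝ E]
    {T : TopologicalSpace E} {a b : ℝ} {γ : ℝ → E} {x : E} :
    RiemannIntegrableTo T a b γ x ↔ ∀ V ∈ @nhds E T x, ∃ δ > 0, ∀ k t s,
      IsFineTaggedPartition a b δ k t s → riemannSum γ k t s ∈ V := by
  refine forall₂_congr fun V _ => exists_congr fun δ => and_congr_right fun _ => ?_
  exact ⟨fun h k t s hP => h k t s hP.1 hP.2 hP.3 hP.4 hP.5,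
    fun h k t s h₁ h₂ h₃ h₄ h₅ => h k t s ⟨h₁, h₂, h₃, h₄, h₅⟩⟩

theorem map_riemannSum {E F 𝓕 : Type*} [AddCommGroup E] [Module ℝ E] [AddCommGroup F]
    [Module ℝ F] [FunLike 𝓕 E F] [LinearMapClass 𝓕 ℝ E F] (f : 𝓕) (γ : ℝ → E) (k : ℕ)
    (t s : ℕ → ℝ) : f (riemannSum γ k t s) = riemannSum (f ∘ γ) k t s := by
  simp only [riemannSum, map_sum, map_smul, Function.comp_apply]

namespace IsFineTaggedPartition

variable {a b δ : ℝ} {k : ℕ} {t s : ℕ → ℝ}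

theorem le_of_le (hP : IsFineTaggedPartition a b δ k t s) {i j : ℕ} (hij : i ≤ j) (hj : j ≤ k) :
    t i ≤ t j := by
  induction j, hij using Nat.le_induction with
  | base => rfl
  | succ j _ ih => exact (ih (by omega)).trans (hP.mono j (by omega))

theorem mem_Icc (hP : IsFineTaggedPartition a b δ k t s) {i : ℕ} (hi : i ≤ k) :
    t i ∈ Icc a b :=
  ⟨hP.first ▸ hP.le_of_le (Nat.zero_le i) hi, hP.last ▸ hP.le_of_le hi le_rfl⟩

theorem Icc_subset (hP : IsFineTaggedPartition a b δ k t s) {i : ℕ} (hi : i < k) :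
    Icc (t i) (t (i + 1)) ⊆ Icc a b :=
  Icc_subset_Icc (hP.mem_Icc hi.le).1 (hP.mem_Icc hi).2

theorem sum_sub_eq (hP : IsFineTaggedPartition a b δ k t s) :
    ∑ i ∈ Finset.range k, (t (i + 1) - t i) = b - a := by
  rw [Finset.sum_range_sub, hP.first, hP.last]

theorem abs_riemannSum_sub_integral_le (hP : IsFineTaggedPartition a b δ k t s) {g : ℝ → ℝ}
    (hg : IntervalIntegrable g MeasureTheory.volume a b) {C : ℝ}
    (hC : ∀ p ∈ Icc a b, ∀ q ∈ Icc a b, |p - q| < δ → |g p - g q| ≤ C) :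
    |riemannSum g k t s - ∫ x in a..b, g x| ≤ (b - a) * C := by
  have hint : ∀ i < k, IntervalIntegrable g MeasureTheory.volume (t i) (t (i + 1)) :=
    fun i hi => hg.mono_set <|
      uIcc_subset_uIcc (Icc_subset_uIcc (hP.mem_Icc hi.le)) (Icc_subset_uIcc (hP.mem_Icc hi))
  have hpiece : ∀ i < k,
      |(t (i + 1) - t i) * g (s i) - ∫ x in t i..t (i + 1), g x| ≤ (t (i + 1) - t i) * C := by
    intro i hi
    have hti := hP.mono i hi
    rw [← smul_eq_mul, ← intervalIntegral.integral_const,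
      ← intervalIntegral.integral_sub intervalIntegrable_const (hint i hi), mul_comm,
      ← abs_of_nonneg (sub_nonneg.2 hti), ← Real.norm_eq_abs]
    refine intervalIntegral.norm_integral_le_of_norm_le_const fun x hx => ?_
    rw [Real.norm_eq_abs]
    rw [uIoc_of_le hti] at hx
    have hs := hP.tag_mem i hi
    exact hC _ (hP.Icc_subset hi hs) _ (hP.Icc_subset hi (Ioc_subset_Icc_self hx))
      (abs_sub_lt_iff.2 ⟨by linarith [hx.1, hs.2, hP.mesh_lt i hi],
        by linarith [hx.2, hs.1, hP.mesh_lt i hi]⟩)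
  have hsplit : ∫ x in a..b, g x = ∑ i ∈ Finset.range k, ∫ x in t i..t (i + 1), g x := by
    rw [intervalIntegral.sum_integral_adjacent_intervals hint, hP.first, hP.last]
  calc |riemannSum g k t s - ∫ x in a..b, g x|
      = |∑ i ∈ Finset.range k, ((t (i + 1) - t i) * g (s i) - ∫ x in t i..t (i + 1), g x)| := by
        rw [hsplit, Finset.sum_sub_distrib, riemannSum]
        simp only [smul_eq_mul]
    _ ≤ ∑ i ∈ Finset.range k, |(t (i + 1) - t i) * g (s i) - ∫ x in t i..t (i + 1), g x| :=
        Finset.abs_sum_le_sum_abs _ _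
    _ ≤ ∑ i ∈ Finset.range k, (t (i + 1) - t i) * C :=
        Finset.sum_le_sum fun i hi => hpiece i (Finset.mem_range.1 hi)
    _ = (b - a) * C := by rw [← Finset.sum_mul, hP.sum_sub_eq]

end IsFineTaggedPartition

section TopologicalVectorSpace

variable {X : Type*} [AddCommGroup X] [TopologicalSpace X] [IsTopologicalAddGroup X]

theorem IsCompact.exists_pos_forall_sub_mem {α : Type*} [PseudoMetricSpace α] {s : Set α}
    (hs : IsCompact s) {γ : α → X} (hγ : ContinuousOn γ s) {W : Set X} (hW : W ∈ 𝓝 0) :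
    ∃ δ > 0, ∀ p ∈ s, ∀ q ∈ s, dist p q < δ → γ p - γ q ∈ W := by
  let := IsTopologicalAddGroup.rightUniformSpace X
  have := isUniformAddGroup_of_addCommGroup (G := X)
  have hent : {x : X × X | x.1 - x.2 ∈ W} ∈ 𝓤 X := by
    rw [uniformity_eq_comap_nhds_zero_swapped X]
    exact preimage_mem_comap hW
  obtain ⟨δ, hδ, hmaps⟩ := (Metric.uniformity_basis_dist.inf_principal (s ×ˢ s)).tendsto_left_iff.1
    (hs.uniformContinuousOn_of_continuous hγ) _ hent
  exact ⟨δ, hδ, fun p hp q hq hpq => hmaps (x := (p, q)) ⟨hpq, hp, hq⟩⟩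

variable [Module ℝ X] [ContinuousSMul ℝ X]

theorem exists_convex_mem_nhds_zero_closure_smul_subset [LocallyConvexSpace ℝ X] {c : ℝ}
    (hc : c ≠ 0) {V : Set X} (hV : V ∈ 𝓝 0) :
    ∃ W ∈ 𝓝 (0 : X), Convex ℝ W ∧ closure (c • W) ⊆ V := by
  obtain ⟨C, hC, hCclosed, hCV⟩ :=
    exists_mem_nhds_isClosed_subset ((set_smul_mem_nhds_zero_iff (inv_ne_zero hc)).2 hV)
  obtain ⟨W, ⟨hW, hWconv⟩, hWC⟩ := (LocallyConvexSpace.convex_basis_zero ℝ X).mem_iff.1 hC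
  refine ⟨W, hW, hWconv, ?_⟩
  rw [closure_smul₀' hc, ← smul_inv_smul₀ hc V]
  exact smul_set_mono ((closure_minimal hWC hCclosed).trans hCV)

namespace IsFineTaggedPartition

variable {a b δ : ℝ} {k k' : ℕ} {t s t' s' : ℕ → ℝ}

theorem riemannSum_sub_mem_closure_smul [LocallyConvexSpace ℝ X] {γ : ℝ → X}
    (hab : a < b) (hγ : ContinuousOn γ (Icc a b)) {W : Set X} (hW : Convex ℝ W)
    (hγW : ∀ p ∈ Icc a b, ∀ q ∈ Icc a b, |p - q| < δ → γ p - γ q ∈ W)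
    (hP : IsFineTaggedPartition a b δ k t s) (hP' : IsFineTaggedPartition a b δ k' t' s') :
    riemannSum γ k t s - riemannSum γ k' t' s' ∈ closure ((2 * (b - a)) • W) := by
  have hc : 0 < 2 * (b - a) := by linarith
  by_contra hz
  obtain ⟨f, u, hfu, hu⟩ :=
    geometric_hahn_banach_closed_point (hW.smul _).closure isClosed_closure hz
  have hfγ : ∀ p ∈ Icc a b, ∀ q ∈ Icc a b, |p - q| < δ → f (γ p) - f (γ q) ≤ u / (2 * (b - a)) :=
    fun p hp q hq hpq => by
      have := hfu _ (subset_closure (smul_mem_smul_set (hγW p hp q hq hpq)))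
      rw [map_smul, map_sub, smul_eq_mul] at this
      rw [le_div_iff₀' hc]
      exact this.le
  have hC : ∀ p ∈ Icc a b, ∀ q ∈ Icc a b, |p - q| < δ →
      |(f ∘ γ) p - (f ∘ γ) q| ≤ u / (2 * (b - a)) :=
    fun p hp q hq hpq => abs_sub_le_iff.2
      ⟨hfγ p hp q hq hpq, hfγ q hq p hp (by rwa [abs_sub_comm])⟩
  have hg : IntervalIntegrable (f ∘ γ) MeasureTheory.volume a b :=
    (f.continuous.comp_continuousOn hγ).intervalIntegrable_of_Icc hab.le
  have h := hP.abs_riemannSum_sub_integral_le hg hC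
  have h' := hP'.abs_riemannSum_sub_integral_le hg hC
  have : (b - a) * (u / (2 * (b - a))) = u / 2 := by field_simp [(sub_pos.2 hab).ne']
  rw [map_sub, map_riemannSum, map_riemannSum] at hu
  linarith [abs_le.1 h, abs_le.1 h']

end IsFineTaggedPartition

end TopologicalVectorSpace

noncomputable def uniformPartition (a b : ℝ) (n i : ℕ) : ℝ :=
  a + i * ((b - a) / (n + 1))

theorem isFineTaggedPartition_uniformPartition {a b δ : ℝ} (hab : a ≤ b) {n : ℕ}
    (hn : (b - a) / (n + 1) < δ) :
    IsFineTaggedPartition a b δ (n + 1) (uniformPartition a b n) (uniformPartition a b n) := by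
  have hstep : ∀ i : ℕ, uniformPartition a b n (i + 1) - uniformPartition a b n i =
      (b - a) / (n + 1) := fun i => by
    simp only [uniformPartition]
    push_cast
    ring
  have hstep_nonneg : 0 ≤ (b - a) / (n + 1) := by
    have := sub_nonneg.2 hab
    positivity
  refine ⟨by simp [uniformPartition], ?_, fun i _ => ?_, fun i _ => (hstep i).symm ▸ hn,
    fun i _ => ⟨le_rfl, ?_⟩⟩
  · simp only [uniformPartition]
    push_cast
    field_simp
    ring
  all_goals linarith [hstep i]

theorem eventually_isFineTaggedPartition_uniformPartition {a b δ : ℝ} (hab : a ≤ b)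
    (hδ : 0 < δ) : ∀ᶠ n in atTop,
      IsFineTaggedPartition a b δ (n + 1) (uniformPartition a b n) (uniformPartition a b n) := by
  have hmesh : Tendsto (fun n : ℕ => (b - a) / ((n : ℝ) + 1)) atTop (𝓝 0) := by
    simpa [Function.comp_def] using
      (tendsto_const_div_atTop_nhds_zero_nat (b - a)).comp (tendsto_add_atTop_nat 1)
  filter_upwards [hmesh.eventually (gt_mem_nhds hδ)] with n hn
  exact isFineTaggedPartition_uniformPartition hab hn

theorem exists_riemannIntegrableTo_of_cauchy {X : Type*} [AddCommGroup X] [Module ℝ X]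
    [U : TopologicalSpace X] [IsTopologicalAddGroup X] (hsc : SeqComplete U) {a b : ℝ}
    (hab : a ≤ b) {γ : ℝ → X}
    (hcauchy : ∀ V ∈ 𝓝 (0 : X), ∃ δ > 0, ∀ k t s k' t' s', IsFineTaggedPartition a b δ k t s →
      IsFineTaggedPartition a b δ k' t' s' → riemannSum γ k t s - riemannSum γ k' t' s' ∈ V) :
    ∃ x : X, RiemannIntegrableTo U a b γ x := by
  set u : ℕ → X := fun n =>
    riemannSum γ (n + 1) (uniformPartition a b n) (uniformPartition a b n)
  obtain ⟨x, hx⟩ := hsc u fun V hV => by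
    obtain ⟨δ, hδ, hδV⟩ := hcauchy V hV
    obtain ⟨N, hN⟩ := eventually_atTop.1 (eventually_isFineTaggedPartition_uniformPartition hab hδ)
    exact ⟨N, fun m hm n hn => hδV _ _ _ _ _ _ (hN m hm) (hN n hn)⟩
  refine ⟨x, riemannIntegrableTo_iff.2 fun V hV => ?_⟩
  obtain ⟨V₁, hV₁, hV₁V⟩ :=
    exists_nhds_zero_half ((continuous_const_add x).tendsto' 0 x (add_zero x) hV)
  obtain ⟨δ, hδ, hδV₁⟩ := hcauchy V₁ hV₁
  refine ⟨δ, hδ, fun k t s hP => ?_⟩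
  have hux : ∀ᶠ n in atTop, u n - x ∈ V₁ :=
    hx ((continuous_sub_right x).tendsto' x 0 (sub_self x) hV₁)
  obtain ⟨n, hnx, hn⟩ :=
    (hux.and (eventually_isFineTaggedPartition_uniformPartition hab hδ)).exists
  have hsum : riemannSum γ k t s - u n ∈ V₁ := hδV₁ _ _ _ _ _ _ hP hn
  simpa using hV₁V _ hsum _ hnx

/-- In a sequentially complete real locally convex topological vector space,
every continuous curve on a compact interval `[a,b]` (with `a < b`) is Riemann integrable
to some element. -/
theorem exists_riemannIntegral_of_continuous {X : Type*} [AddCommGroup X] [Module ℝ X]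
    [U : TopologicalSpace X] [IsTopologicalAddGroup X] [ContinuousSMul ℝ X]
    [LocallyConvexSpace ℝ X] (hsc : SeqComplete U)
    (a b : ℝ) (hab : a < b) (γ : ℝ → X) (hγ : ContinuousOn γ (Set.Icc a b)) :
    ∃ x : X, RiemannIntegrableTo U a b γ x := by
  refine exists_riemannIntegrableTo_of_cauchy hsc hab.le fun V hV => ?_
  obtain ⟨W, hW, hWconv, hWV⟩ :=
    exists_convex_mem_nhds_zero_closure_smul_subset (by linarith : 0 < 2 * (b - a)).ne' hV
  obtain ⟨δ, hδ, hγW⟩ := isCompact_Icc.exists_pos_forall_sub_mem hγ hW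
  refine ⟨δ, hδ, fun k t s k' t' s' hP hP' => hWV ?_⟩
  refine hP.riemannSum_sub_mem_closure_smul hab hγ hWconv (fun p hp q hq hpq => ?_) hP'
  exact hγW p hp q hq (by rwa [Real.dist_eq])
end

section
/- (Mean value theorem) Let E be a real locally convex topological vector space and let U ⊆ E be closed and convex. Let c : [0,1] → E be continuous at the points 0 and 1, with c(0) = 0 ∈ U, and suppose there is a function d : (0,1) → E such that for every t ∈ (0,1), c is differentiable to d(t) at t and d(t) ∈ U. Then c(1) ∈ U. -/
open Set Filter Topology

/-! If the difference quotient `(c b - c a) / (b - a)` were outside `U`, Hahn–Banach would give a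
continuous functional `f` and `u` with `f < u` on `U` and `u < f ((c b - c a) / (b - a))`. The
real function `f ∘ c` is differentiable on `(a,b)` with derivative `f (d t) < u`, so Lagrange's
mean value theorem gives a contradiction. -/

section DiffTo

variable {E : Type*} [AddCommGroup E] [Module ℝ E] [T : TopologicalSpace E]
  {J : Set ℝ} {c : ℝ → E} {t₀ : ℝ} {x : E}

theorem DiffTo.tendsto_slope (h : DiffTo T J c t₀ x) :
    Tendsto (slope c t₀) (𝓝[J \ {t₀}] t₀) (𝓝 x) := by
  intro V hV
  obtain ⟨δ, hδ, hslope⟩ := h V hV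
  rw [mem_map]
  filter_upwards [inter_mem_nhdsWithin (J \ {t₀}) (Metric.ball_mem_nhds t₀ hδ),
    self_mem_nhdsWithin] with y ⟨_, hyδ⟩ ⟨hyJ, hyt₀⟩
  have := hslope (y - t₀) (by simpa using hyJ) (abs_pos.mpr (sub_ne_zero.mpr hyt₀))
    (by rwa [← Real.dist_eq])
  simpa [slope_def_module] using this

theorem DiffTo.hasDerivWithinAt_comp {F : Type*} [NormedAddCommGroup F] [NormedSpace ℝ F]
    (h : DiffTo T J c t₀ x) (f : E →L[ℝ] F) : HasDerivWithinAt (f ∘ c) (f x) J t₀ := by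
  rw [hasDerivWithinAt_iff_tendsto_slope]
  simpa only [Function.comp_def, ← f.coe_coe, ← LinearMap.slope_comp] using
    (f.continuous.tendsto x).comp h.tendsto_slope

end DiffTo

theorem slope_mem_of_diffTo_of_mapsTo {E : Type*} [AddCommGroup E] [Module ℝ E]
    [T : TopologicalSpace E] [IsTopologicalAddGroup E] [ContinuousSMul ℝ E]
    [LocallyConvexSpace ℝ E] {U : Set E} (hUc : IsClosed U) (hUconv : Convex ℝ U)
    {c d : ℝ → E} {a b : ℝ} (hab : a < b)
    (hca : ContinuousWithinAt c (Icc a b) a) (hcb : ContinuousWithinAt c (Icc a b) b)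
    (hd : ∀ t ∈ Ioo a b, DiffTo T (Icc a b) c t (d t)) (hdU : MapsTo d (Ioo a b) U) :
    slope c a b ∈ U := by
  by_contra hslope
  obtain ⟨f, u, hfU, hfslope⟩ := geometric_hahn_banach_closed_point hUconv hUc hslope
  have hderiv : ∀ t ∈ Ioo a b, HasDerivAt (f ∘ c) (f (d t)) t := fun t ht =>
    ((hd t ht).hasDerivWithinAt_comp f).hasDerivAt (Icc_mem_nhds ht.1 ht.2)
  have hcont : ContinuousOn (f ∘ c) (Icc a b) := by
    intro t ht
    rcases ht.1.eq_or_lt with rfl | hat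
    · exact f.continuous.continuousAt.comp_continuousWithinAt hca
    rcases ht.2.eq_or_lt with rfl | htb
    · exact f.continuous.continuousAt.comp_continuousWithinAt hcb
    exact (hderiv t ⟨hat, htb⟩).continuousAt.continuousWithinAt
  obtain ⟨t, ht, hft⟩ := exists_hasDerivAt_eq_slope (f ∘ c) (f ∘ d) hab hcont hderiv
  have : f (d t) = f (slope c a b) :=
    calc f (d t) = (f (c b) - f (c a)) / (b - a) := hft
      _ = slope (f ∘ c) a b := (slope_def_field (f ∘ c) a b).symm
      _ = f (slope c a b) := LinearMap.slope_comp (f : E →ₗ[ℝ] ℝ) c a b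
  linarith [hfU _ (hdU ht)]

theorem mean_value_theorem_closed_convex_general {E : Type*} [AddCommGroup E] [Module ℝ E]
    [T : TopologicalSpace E] [IsTopologicalAddGroup E] [ContinuousSMul ℝ E]
    [LocallyConvexSpace ℝ E]
    (U : Set E) (hUc : IsClosed U) (hUconv : Convex ℝ U)
    (c : ℝ → E)
    (hc0 : ContinuousWithinAt c (Set.Icc 0 1) 0)
    (hc1 : ContinuousWithinAt c (Set.Icc 0 1) 1)
    (hc00 : c 0 = 0)
    (d : ℝ → E)
    (hd : ∀ t ∈ Set.Ioo (0 : ℝ) 1, DiffTo T (Set.Icc 0 1) c t (d t) ∧ d t ∈ U) :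
    c 1 ∈ U := by
  have hslope := slope_mem_of_diffTo_of_mapsTo hUc hUconv one_pos hc0 hc1
    (fun t ht => (hd t ht).1) fun t ht => (hd t ht).2
  simpa [slope_def_module, hc00] using hslope

/-- Mean value theorem: Let `U` be closed and convex in a real locally convex
topological vector space `E`, and let `c : [0,1] → E` be continuous at `0` and `1` with
`c 0 = 0 ∈ U`. If `c` is differentiable at every `t ∈ (0,1)` to some `d t ∈ U`, then
`c 1 ∈ U`. -/
theorem mean_value_theorem_closed_convex {E : Type*} [AddCommGroup E] [Module ℝ E]
    [T : TopologicalSpace E] [IsTopologicalAddGroup E] [ContinuousSMul ℝ E]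
    [LocallyConvexSpace ℝ E]
    (U : Set E) (hUc : IsClosed U) (hUconv : Convex ℝ U)
    (c : ℝ → E)
    (hc0 : ContinuousWithinAt c (Set.Icc 0 1) 0)
    (hc1 : ContinuousWithinAt c (Set.Icc 0 1) 1)
    (hc00 : c 0 = 0) (h0U : (0 : E) ∈ U)
    (d : ℝ → E)
    (hd : ∀ t ∈ Set.Ioo (0 : ℝ) 1, DiffTo T (Set.Icc 0 1) c t (d t) ∧ d t ∈ U) :
    c 1 ∈ U :=
  mean_value_theorem_closed_convex_general (T := T) U hUc hUconv c hc0 hc1 hc00 d hd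
end
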